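/- Let H be a complex Hilbert space and T₀, T₁, Y ∈ B(H). Assume: (i) the only operator A ∈ B(H) with T₀A = AT₁ is A = 0; (ii) every W ∈ B(H) commuting with both T₀ and T₀* is a scalar multiple of the identity; (iii) every W ∈ B(H) commuting with both T₁ and T₁* is a scalar multiple of the identity. Let T := [[T₀, T₁−T₀],[0,T₁]] and T̃ := [[T₁, YT₀−T₁Y],[0,T₀]] act on H ⊕ H. Then there exists a unitary U on H ⊕ H with UT = T̃U if and only if there exists a complex number c with |c| = 1 such that YT₀ − T₁Y = c·(T₀ − T₁). -/

import Mathlib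

/-!
Write `U = [[A, B], [C, D]]`. The bottom row of `U T = T̃ U` makes `C + D` intertwine `T₁` with
`T₀`, and the top row of `U T* = T̃* U` (which follows from unitarity) does the same for
`(A - B)*`; so by (i), `U = [[A, A], [C, -C]]`. Adding and subtracting the remaining entries shows
that `A` commutes with `T₁, T₁*` and `C` with `T₀, T₀*`, so `A = a` and `C = c` are scalars by
(ii) and (iii). Unitarity of `[[a, a], [c, -c]]` means `|a|² = |c|² = 1/2`, and the top-left
entry of `U T = T̃ U` reads `c (Y T₀ - T₁ Y) = a (T₀ - T₁)`. Conversely, for `|c| = 1` the unitary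
`[[c, c], [1, -1]] / √2` works. Only the `*`-algebra structure of `B(H)` enters, so the argument
runs in `2 × 2` matrices over any complex `*`-algebra and is transported to `H ⊕ H` along
`M ↦ blockOp (M 0 0) (M 0 1) (M 1 0) (M 1 1)`.
-/

open ContinuousLinearMap

noncomputable def blockOp {H₀ H₁ K₀ K₁ : Type*}
    [NormedAddCommGroup H₀] [InnerProductSpace ℂ H₀]
    [NormedAddCommGroup H₁] [InnerProductSpace ℂ H₁]
    [NormedAddCommGroup K₀] [InnerProductSpace ℂ K₀]
    [NormedAddCommGroup K₁] [InnerProductSpace ℂ K₁]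
    (A : H₀ →L[ℂ] K₀) (B : H₁ →L[ℂ] K₀) (C : H₀ →L[ℂ] K₁) (D : H₁ →L[ℂ] K₁) :
    WithLp 2 (H₀ × H₁) →L[ℂ] WithLp 2 (K₀ × K₁) :=
  (((WithLp.prodContinuousLinearEquiv 2 ℂ K₀ K₁).symm : (K₀ × K₁) →L[ℂ] WithLp 2 (K₀ × K₁)) ∘L
    ((A.coprod B).prod (C.coprod D))) ∘L
    ((WithLp.prodContinuousLinearEquiv 2 ℂ H₀ H₁ : WithLp 2 (H₀ × H₁) →L[ℂ] (H₀ × H₁)))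

lemma Matrix.star_fin_two {α : Type*} [Star α] (a b c d : α) :
    star !![a, b; c, d] = !![star a, star c; star b, star d] := by
  ext i j
  fin_cases i <;> fin_cases j <;> rfl

lemma Matrix.map_fin_two {α β : Type*} (f : α → β) (a b c d : α) :
    (!![a, b; c, d]).map f = !![f a, f b; f c, f d] := by
  ext i j
  fin_cases i <;> fin_cases j <;> rfl

lemma Matrix.map_mem_unitary_iff {n α β : Type*} [Fintype n] [DecidableEq n] [Semiring α]
    [StarRing α] [Semiring β] [StarRing β] (f : α →+* β) (hf : Function.Injective f)
    (hf_star : ∀ x, f (star x) = star (f x)) {M : Matrix n n α} :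
    M.map f ∈ unitary (Matrix n n β) ↔ M ∈ unitary (Matrix n n α) := by
  simp only [Unitary.mem_iff, Matrix.star_eq_conjTranspose, ← Matrix.conjTranspose_map f hf_star,
    ← Matrix.map_mul, ← Matrix.map_one f (map_zero f) (map_one f), (Matrix.map_injective hf).eq_iff]

lemma SemiconjBy.star_of_mem_unitary {R : Type*} [Monoid R] [StarMul R] {U a b : R}
    (hU : U ∈ unitary R) (h : SemiconjBy U a b) : SemiconjBy U (star a) (star b) := by
  have h' : star a * star U = star U * star b := by
    simpa only [star_mul] using congrArg star h.eq
  calc U * star a = U * (star a * star U) * U := by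
        rw [mul_assoc, mul_assoc, Unitary.star_mul_self_of_mem hU, mul_one]
    _ = star b * U := by
        rw [h', ← mul_assoc, Unitary.mul_star_self_of_mem hU, one_mul]

lemma exists_mem_unitary_semiconjBy_map_iff {F A B : Type*} [Monoid A] [StarMul A] [Monoid B]
    [StarMul B] [EquivLike F A B] [MulEquivClass F A B] [StarHomClass F A B] (e : F) (a b : A) :
    (∃ U ∈ unitary B, SemiconjBy U (e a) (e b)) ↔ ∃ V ∈ unitary A, SemiconjBy V a b := by
  constructor
  · rintro ⟨U, hU, h⟩
    obtain ⟨V, rfl⟩ := EquivLike.surjective e U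
    refine ⟨V, ?_, (semiconjBy_map_iff (EquivLike.injective e)).mp h⟩
    rw [Unitary.mem_iff] at hU ⊢
    simpa only [← map_star, ← map_mul, ← map_one e, (EquivLike.injective e).eq_iff] using hU
  · rintro ⟨V, hV, h⟩
    exact ⟨e V, Unitary.map_mem e hV, h.map e⟩

section ScalarBlock

variable {R : Type*} [Ring R] [Algebra ℂ R]

variable (R) in
def scalarBlock (a c : ℂ) : Matrix (Fin 2) (Fin 2) R := (!![a, a; c, -c]).map (algebraMap ℂ R)

lemma scalarBlock_mem_unitary_iff [StarRing R] [StarModule ℂ R] [Nontrivial R] (a c : ℂ) :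
    scalarBlock R a c ∈ unitary _ ↔ 2 * ‖a‖ ^ 2 = 1 ∧ 2 * ‖c‖ ^ 2 = 1 := by
  rw [scalarBlock, Matrix.map_mem_unitary_iff _ (algebraMap ℂ R).injective algebraMap_star_comm,
    ← Matrix.unitaryGroup, Matrix.mem_unitaryGroup_iff]
  simp only [Matrix.star_fin_two, Matrix.mul_fin_two, Matrix.one_fin_two,
    EmbeddingLike.apply_eq_iff_eq, Matrix.vecCons_inj, and_true]
  simp only [Complex.star_def, Complex.mul_conj', ← two_mul, map_neg, mul_neg, neg_mul, neg_neg,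
    add_neg_cancel, true_and, and_true]
  norm_cast

lemma scalarBlock_semiconjBy_iff (T₀ T₁ S : R) (a c : ℂ) :
    SemiconjBy (scalarBlock R a c) !![T₀, T₁ - T₀; 0, T₁] !![T₁, S; 0, T₀] ↔
      c • S = a • (T₀ - T₁) := by
  simp only [scalarBlock, Matrix.map_fin_two, SemiconjBy, Matrix.mul_fin_two, map_neg, neg_mul,
    mul_neg, mul_zero, add_zero, zero_add, ← Algebra.commutes, ← Algebra.smul_def, smul_sub,
    EmbeddingLike.apply_eq_iff_eq, Matrix.vecCons_inj, and_true, true_and]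
  constructor
  · rintro ⟨⟨h, -⟩, -⟩
    rw [h]
    abel
  · intro h
    rw [h]
    refine ⟨⟨?_, ?_⟩, ?_⟩ <;> abel

lemma exists_eq_scalarBlock_of_semiconjBy [StarRing R] {T₀ T₁ S : R}
    (hker : ∀ A : R, T₀ * A = A * T₁ → A = 0)
    (hirr₀ : ∀ W : R, Commute W T₀ → Commute W (star T₀) → ∃ c : ℂ, W = c • 1)
    (hirr₁ : ∀ W : R, Commute W T₁ → Commute W (star T₁) → ∃ c : ℂ, W = c • 1)
    {U : Matrix (Fin 2) (Fin 2) R} (hU : SemiconjBy U !![T₀, T₁ - T₀; 0, T₁] !![T₁, S; 0, T₀])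
    (hU' : SemiconjBy U (star !![T₀, T₁ - T₀; 0, T₁]) (star !![T₁, S; 0, T₀])) :
    ∃ a c : ℂ, U = scalarBlock R a c := by
  obtain ⟨A, B, C, D, rfl⟩ : ∃ A B C D, U = !![A, B; C, D] := ⟨_, _, _, _, U.eta_fin_two⟩
  simp only [SemiconjBy, Matrix.star_fin_two, Matrix.mul_fin_two, star_zero, star_sub, mul_zero,
    zero_mul, add_zero, zero_add, EmbeddingLike.apply_eq_iff_eq, Matrix.vecCons_inj,
    and_true] at hU hU'
  obtain ⟨⟨e₀₀, e₀₁⟩, e₁₀, e₁₁⟩ := hU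
  obtain ⟨⟨f₀₀, f₀₁⟩, f₁₀, f₁₁⟩ := hU'
  obtain rfl : D = -C := eq_neg_of_add_eq_zero_right <| hker (C + D) <| by
    rw [mul_add, ← e₁₀, ← e₁₁]
    noncomm_ring
  obtain rfl : A = B := by
    have hAB : (A - B) * star T₀ = star T₁ * (A - B) := by
      rw [sub_mul, mul_sub, ← f₀₀, ← f₀₁]
      noncomm_ring
    have := hker (star (A - B)) (by simpa only [star_mul, star_star] using congrArg star hAB)
    exact sub_eq_zero.mp (star_eq_zero.mp this)
  have hC : C * star T₀ = star T₀ * C := by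
    have : C * star T₀ + C * star T₀ = star T₀ * C + star T₀ * C := calc
      _ = (C * star T₀ + -C * (star T₁ - star T₀)) - -C * star T₁ := by noncomm_ring
      _ = (star S * A + star T₀ * C) - (star S * A + star T₀ * -C) := by rw [f₁₀, f₁₁]
      _ = _ := by noncomm_ring
    simpa [← two_smul ℂ] using this
  have hA : A * T₁ = T₁ * A := by
    have : A * T₁ + A * T₁ = T₁ * A + T₁ * A := calc
      _ = A * T₀ + (A * (T₁ - T₀) + A * T₁) := by noncomm_ring
      _ = (T₁ * A + S * C) + (T₁ * A + S * -C) := by rw [e₀₀, e₀₁]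
      _ = _ := by noncomm_ring
    simpa [← two_smul ℂ] using this
  obtain ⟨c, rfl⟩ := hirr₀ C e₁₀ hC
  obtain ⟨a, rfl⟩ := hirr₁ A hA f₀₁
  exact ⟨a, c, by simp [scalarBlock, Matrix.map_fin_two, Algebra.algebraMap_eq_smul_one]⟩

theorem exists_mem_unitary_semiconjBy_iff [StarRing R] [StarModule ℂ R] {T₀ T₁ S : R}
    (hker : ∀ A : R, T₀ * A = A * T₁ → A = 0)
    (hirr₀ : ∀ W : R, Commute W T₀ → Commute W (star T₀) → ∃ c : ℂ, W = c • 1)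
    (hirr₁ : ∀ W : R, Commute W T₁ → Commute W (star T₁) → ∃ c : ℂ, W = c • 1) :
    (∃ U ∈ unitary (Matrix (Fin 2) (Fin 2) R),
      SemiconjBy U !![T₀, T₁ - T₀; 0, T₁] !![T₁, S; 0, T₀]) ↔
    ∃ c : ℂ, ‖c‖ = 1 ∧ S = c • (T₀ - T₁) := by
  rcases subsingleton_or_nontrivial R with _ | _
  · exact iff_of_true ⟨1, one_mem _, Subsingleton.elim _ _⟩ ⟨1, by simp, Subsingleton.elim _ _⟩
  constructor
  · rintro ⟨U, hU, hUT⟩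
    obtain ⟨a, c, rfl⟩ :=
      exists_eq_scalarBlock_of_semiconjBy hker hirr₀ hirr₁ hUT (hUT.star_of_mem_unitary hU)
    obtain ⟨ha, hc⟩ := (scalarBlock_mem_unitary_iff a c).mp hU
    have hc0 : c ≠ 0 := by
      rintro rfl
      norm_num at hc
    have hac : ‖a‖ = ‖c‖ := by
      rw [← sq_eq_sq₀ (norm_nonneg _) (norm_nonneg _)]
      linarith
    refine ⟨a / c, by rw [norm_div, hac, div_self (norm_ne_zero_iff.mpr hc0)], ?_⟩
    rw [div_eq_inv_mul, mul_smul, ← (scalarBlock_semiconjBy_iff T₀ T₁ S a c).mp hUT,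
      inv_smul_smul₀ hc0]
  · rintro ⟨c, hc, rfl⟩
    set r : ℂ := ((√2 : ℝ) : ℂ)⁻¹
    have hr : 2 * ‖r‖ ^ 2 = 1 := by
      simp [r, Real.sq_sqrt]
    refine ⟨scalarBlock R (c * r) r, (scalarBlock_mem_unitary_iff _ _).mpr ⟨?_, hr⟩,
      (scalarBlock_semiconjBy_iff _ _ _ _ _).mpr ?_⟩
    · rwa [norm_mul, hc, one_mul]
    · rw [smul_smul, mul_comm]

end ScalarBlock

section BlockOp

variable {H₀ H₁ K₀ K₁ L₀ L₁ : Type*}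
  [NormedAddCommGroup H₀] [InnerProductSpace ℂ H₀] [NormedAddCommGroup H₁] [InnerProductSpace ℂ H₁]
  [NormedAddCommGroup K₀] [InnerProductSpace ℂ K₀] [NormedAddCommGroup K₁] [InnerProductSpace ℂ K₁]
  [NormedAddCommGroup L₀] [InnerProductSpace ℂ L₀] [NormedAddCommGroup L₁] [InnerProductSpace ℂ L₁]

@[simp]
lemma blockOp_apply (A : H₀ →L[ℂ] K₀) (B : H₁ →L[ℂ] K₀) (C : H₀ →L[ℂ] K₁) (D : H₁ →L[ℂ] K₁)
    (x : WithLp 2 (H₀ × H₁)) :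
    blockOp A B C D x = WithLp.toLp 2 (A x.fst + B x.snd, C x.fst + D x.snd) := rfl

lemma blockOp_comp (A : K₀ →L[ℂ] L₀) (B : K₁ →L[ℂ] L₀) (C : K₀ →L[ℂ] L₁) (D : K₁ →L[ℂ] L₁)
    (A' : H₀ →L[ℂ] K₀) (B' : H₁ →L[ℂ] K₀) (C' : H₀ →L[ℂ] K₁) (D' : H₁ →L[ℂ] K₁) :
    blockOp A B C D ∘L blockOp A' B' C' D' =
      blockOp (A ∘L A' + B ∘L C') (A ∘L B' + B ∘L D') (C ∘L A' + D ∘L C') (C ∘L B' + D ∘L D') := by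
  ext x : 1
  refine WithLp.ofLp_injective 2 (Prod.ext ?_ ?_) <;>
    simp only [comp_apply, blockOp_apply, WithLp.toLp_fst, WithLp.toLp_snd, map_add, add_apply] <;>
    abel

lemma blockOp_add (A A' : H₀ →L[ℂ] K₀) (B B' : H₁ →L[ℂ] K₀) (C C' : H₀ →L[ℂ] K₁)
    (D D' : H₁ →L[ℂ] K₁) :
    blockOp (A + A') (B + B') (C + C') (D + D') = blockOp A B C D + blockOp A' B' C' D' := by
  ext x : 1
  refine WithLp.ofLp_injective 2 (Prod.ext ?_ ?_) <;>
    simp only [blockOp_apply, add_apply, WithLp.ofLp_add, Prod.mk_add_mk] <;> abel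

lemma blockOp_adjoint [CompleteSpace H₀] [CompleteSpace H₁] [CompleteSpace K₀] [CompleteSpace K₁]
    (A : H₀ →L[ℂ] K₀) (B : H₁ →L[ℂ] K₀) (C : H₀ →L[ℂ] K₁) (D : H₁ →L[ℂ] K₁) :
    adjoint (blockOp A B C D) = blockOp (adjoint A) (adjoint C) (adjoint B) (adjoint D) := by
  refine ((eq_adjoint_iff _ _).mpr fun x y => ?_).symm
  simp only [blockOp_apply, WithLp.prod_inner_apply, WithLp.ofLp_fst, WithLp.ofLp_snd,
    inner_add_left, inner_add_right, adjoint_inner_left]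
  ring

lemma blockOp_inj {A A' : H₀ →L[ℂ] K₀} {B B' : H₁ →L[ℂ] K₀} {C C' : H₀ →L[ℂ] K₁}
    {D D' : H₁ →L[ℂ] K₁} :
    blockOp A B C D = blockOp A' B' C' D' ↔ A = A' ∧ B = B' ∧ C = C' ∧ D = D' := by
  refine ⟨fun h => ?_, fun ⟨hA, hB, hC, hD⟩ => hA ▸ hB ▸ hC ▸ hD ▸ rfl⟩
  have key (x : H₀) (y : H₁) := congr(WithLp.ofLp ($h (WithLp.toLp 2 (x, y))))
  simp only [blockOp_apply, Prod.mk.injEq] at key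
  refine ⟨ext fun z => ?_, ext fun z => ?_, ext fun z => ?_, ext fun z => ?_⟩
  · simpa using (key z 0).1
  · simpa using (key 0 z).1
  · simpa using (key z 0).2
  · simpa using (key 0 z).2

lemma exists_blockOp (U : WithLp 2 (H₀ × H₁) →L[ℂ] WithLp 2 (K₀ × K₁)) :
    ∃ A B C D, U = blockOp A B C D := by
  let ι₀ : H₀ →L[ℂ] WithLp 2 (H₀ × H₁) :=
    (WithLp.prodContinuousLinearEquiv 2 ℂ H₀ H₁).symm.toContinuousLinearMap ∘L inl ℂ H₀ H₁
  let ι₁ : H₁ →L[ℂ] WithLp 2 (H₀ × H₁) :=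
    (WithLp.prodContinuousLinearEquiv 2 ℂ H₀ H₁).symm.toContinuousLinearMap ∘L inr ℂ H₀ H₁
  refine ⟨WithLp.fstL 2 ℂ K₀ K₁ ∘L U ∘L ι₀, WithLp.fstL 2 ℂ K₀ K₁ ∘L U ∘L ι₁,
    WithLp.sndL 2 ℂ K₀ K₁ ∘L U ∘L ι₀, WithLp.sndL 2 ℂ K₀ K₁ ∘L U ∘L ι₁, ?_⟩
  ext x : 1
  have hx : x = ι₀ x.fst + ι₁ x.snd :=
    WithLp.ofLp_injective 2 (Prod.ext (by simp [ι₀, ι₁]) (by simp [ι₀, ι₁]))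
  conv_lhs => rw [hx, map_add]
  refine WithLp.ofLp_injective 2 (Prod.ext ?_ ?_) <;> simp

end BlockOp

section BlockOpEquiv

variable {H : Type*} [NormedAddCommGroup H] [InnerProductSpace ℂ H]

noncomputable def Matrix.toBlockOp (M : Matrix (Fin 2) (Fin 2) (H →L[ℂ] H)) :
    WithLp 2 (H × H) →L[ℂ] WithLp 2 (H × H) :=
  blockOp (M 0 0) (M 0 1) (M 1 0) (M 1 1)

lemma Matrix.toBlockOp_mul (M N : Matrix (Fin 2) (Fin 2) (H →L[ℂ] H)) :
    (M * N).toBlockOp = M.toBlockOp * N.toBlockOp := by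
  simp only [toBlockOp, mul_def, blockOp_comp, Matrix.mul_apply, Fin.sum_univ_two]

lemma Matrix.toBlockOp_add (M N : Matrix (Fin 2) (Fin 2) (H →L[ℂ] H)) :
    (M + N).toBlockOp = M.toBlockOp + N.toBlockOp :=
  blockOp_add _ _ _ _ _ _ _ _

lemma Matrix.toBlockOp_star [CompleteSpace H] (M : Matrix (Fin 2) (Fin 2) (H →L[ℂ] H)) :
    (star M).toBlockOp = star M.toBlockOp := by
  simp only [toBlockOp, star_eq_adjoint, blockOp_adjoint, Matrix.star_apply]

lemma Matrix.toBlockOp_bijective :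
    Function.Bijective (Matrix.toBlockOp : Matrix (Fin 2) (Fin 2) (H →L[ℂ] H) → _) := by
  refine ⟨fun M N h => ?_, fun U => ?_⟩
  · obtain ⟨h00, h01, h10, h11⟩ := blockOp_inj.mp h
    rw [M.eta_fin_two, N.eta_fin_two, h00, h01, h10, h11]
  · obtain ⟨A, B, C, D, rfl⟩ := exists_blockOp U
    exact ⟨!![A, B; C, D], rfl⟩

variable (H) in
noncomputable def blockOpStarRingEquiv [CompleteSpace H] :
    Matrix (Fin 2) (Fin 2) (H →L[ℂ] H) ≃⋆+* (WithLp 2 (H × H) →L[ℂ] WithLp 2 (H × H)) :=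
  { Equiv.ofBijective _ Matrix.toBlockOp_bijective with
    map_mul' := Matrix.toBlockOp_mul
    map_add' := Matrix.toBlockOp_add
    map_star' := Matrix.toBlockOp_star }

end BlockOpEquiv

/-- with `T = [[T₀, T₁-T₀],[0,T₁]]` and `T̃ = [[T₁, YT₀-T₁Y],[0,T₀]]`,
assuming `ker σ_{T₀,T₁} = 0` and `{T_i, T_i*}' = ℂ·1`, a unitary `U` with `UT = T̃U`
exists iff `YT₀ - T₁Y = c(T₀ - T₁)` for some unimodular `c`. -/
theorem stmt6 {H : Type*}
    [NormedAddCommGroup H] [InnerProductSpace ℂ H] [CompleteSpace H]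
    (T₀ T₁ Y : H →L[ℂ] H)
    (h1 : ∀ A : H →L[ℂ] H, T₀ ∘L A = A ∘L T₁ → A = 0)
    (h2 : ∀ W : H →L[ℂ] H, W ∘L T₀ = T₀ ∘L W → W ∘L adjoint T₀ = adjoint T₀ ∘L W →
      ∃ c : ℂ, W = c • 1)
    (h3 : ∀ W : H →L[ℂ] H, W ∘L T₁ = T₁ ∘L W → W ∘L adjoint T₁ = adjoint T₁ ∘L W →
      ∃ c : ℂ, W = c • 1) :
    (∃ U : WithLp 2 (H × H) →L[ℂ] WithLp 2 (H × H),
      adjoint U ∘L U = 1 ∧ U ∘L adjoint U = 1 ∧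
      U ∘L blockOp T₀ (T₁ - T₀) 0 T₁ = blockOp T₁ (Y ∘L T₀ - T₁ ∘L Y) 0 T₀ ∘L U) ↔
    (∃ c : ℂ, ‖c‖ = 1 ∧ Y ∘L T₀ - T₁ ∘L Y = c • (T₀ - T₁)) := by
  rw [← exists_mem_unitary_semiconjBy_iff h1 h2 h3,
    ← exists_mem_unitary_semiconjBy_map_iff (blockOpStarRingEquiv H)]
  exact exists_congr fun U => by rw [Unitary.mem_iff, and_assoc]; rfl
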